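/- Under the penny construction with inequalities (1)–(3) and E₀ < 0, for every nonempty T ⊆ Fin n with |T| = k, the total energy satisfies E(T) < (k−1)·E₀ if and only if every two distinct indices i, j ∈ T satisfy dist(x i, x j) ≥ √2·n (i.e., T corresponds to an independent set in the tangency graph). -/

import Mathlib

/-- The total Buckingham–Coulomb interaction (per direction) between two unit-charge ion
pairs whose planar centres are at distance `r`, one ion of each pair at height `0` and
the other at height `1`. -/
noncomputable def pennyF (A11 B11 C11 A12 B12 C12 r : ℝ) : ℝ :=
  A11 * Real.exp (-(B11 * r)) - C11 / r ^ 6 + 1 / r +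
    A12 * Real.exp (-(B12 * Real.sqrt (r ^ 2 + 1))) - C12 / (r ^ 2 + 1) ^ 3 -
    1 / Real.sqrt (r ^ 2 + 1)

/-- The internal Buckingham–Coulomb energy of a single pair: two opposite unit charges at
distance `1`. -/
noncomputable def pennyE0 (A12 B12 C12 : ℝ) : ℝ := A12 * Real.exp (-B12) - C12 - 1

/-- Position in `ℝ³` of the ion `(i, b)`: the planar point `x i` at height `0` if
`b = false` (positive ion) and at height `1` if `b = true` (negative ion). -/
noncomputable def pennyPos {n : ℕ} (x : Fin n → EuclideanSpace ℝ (Fin 2))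
    (q : Fin n × Bool) : EuclideanSpace ℝ (Fin 3) :=
  WithLp.toLp 2 ![x q.1 0, x q.1 1, if q.2 then 1 else 0]

/-- The Buckingham–Coulomb energy between two distinct ions: same-sign ions use the
parameters `(A11, B11, C11)` and Coulomb term `+1/r`, opposite-sign ions use
`(A12, B12, C12)` and Coulomb term `−1/r`. -/
noncomputable def pennyU (A11 B11 C11 A12 B12 C12 : ℝ) {n : ℕ}
    (x : Fin n → EuclideanSpace ℝ (Fin 2)) (a b : Fin n × Bool) : ℝ :=
  if a.2 = b.2 then
    A11 * Real.exp (-(B11 * dist (pennyPos x a) (pennyPos x b))) -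
      C11 / dist (pennyPos x a) (pennyPos x b) ^ 6 +
      1 / dist (pennyPos x a) (pennyPos x b)
  else
    A12 * Real.exp (-(B12 * dist (pennyPos x a) (pennyPos x b))) -
      C12 / dist (pennyPos x a) (pennyPos x b) ^ 6 -
      1 / dist (pennyPos x a) (pennyPos x b)

/-- The total energy of a set `S` of ions: the sum of pairwise energies over all
unordered pairs of distinct ions in `S` (realised as half the ordered sum). -/
noncomputable def pennyES (A11 B11 C11 A12 B12 C12 : ℝ) {n : ℕ}
    (x : Fin n → EuclideanSpace ℝ (Fin 2)) (S : Finset (Fin n × Bool)) : ℝ :=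
  (∑ p ∈ S.offDiag, pennyU A11 B11 C11 A12 B12 C12 x p.1 p.2) / 2

/-- The total energy of the `2|T|` ions whose indices lie in `T`. -/
noncomputable def pennyET (A11 B11 C11 A12 B12 C12 : ℝ) {n : ℕ}
    (x : Fin n → EuclideanSpace ℝ (Fin 2)) (T : Finset (Fin n)) : ℝ :=
  pennyES A11 B11 C11 A12 B12 C12 x (T ×ˢ (Finset.univ : Finset Bool))

/-!
Stacking the two charges of a penny vertically at unit distance, the energy of the ions indexed
by `T` is `k·E₀` plus `f(dist)` over ordered pairs of distinct indices, since the four ion–ion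
interactions of two pennies add up to `2 f`. If some pair is tangent, inequalities (1) and (3)
make every term nonnegative and that pair alone contributes at least `−E₀`. If no pair is tangent,
(2) bounds each of the fewer than `n²` terms by `−E₀ / n²`.
-/

lemma Finset.sum_offDiag_add_sum_self {α β : Type*} [DecidableEq α] [AddCommMonoid β]
    (s : Finset α) (f : α → α → β) :
    ∑ p ∈ s.offDiag, f p.1 p.2 + ∑ i ∈ s, f i i = ∑ i ∈ s, ∑ j ∈ s, f i j := by
  rw [← Finset.sum_product' s s f, ← Finset.diag_union_offDiag,
    Finset.sum_union (Finset.disjoint_diag_offDiag s), Finset.sum_diag, add_comm]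

lemma Finset.sum_offDiag_lt_of_sq_mul_le {α : Type*} [DecidableEq α] {s : Finset α} {n : ℕ}
    (hs : s.card ≤ n) {f : α × α → ℝ} {c : ℝ} (hc : 0 < c)
    (hf : ∀ p ∈ s.offDiag, (n : ℝ) ^ 2 * f p ≤ c) :
    ∑ p ∈ s.offDiag, f p < c := by
  rcases s.offDiag.eq_empty_or_nonempty with hempty | ⟨p, hp⟩
  · simpa [hempty] using hc
  have hs_pos : 0 < s.card := Finset.card_pos.mpr ⟨p.1, (Finset.mem_offDiag.mp hp).1⟩
  have hcard : (s.offDiag.card : ℝ) < (n : ℝ) ^ 2 := by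
    have : s.card * s.card - s.card < n * n :=
      (Nat.sub_lt (Nat.mul_pos hs_pos hs_pos) hs_pos).trans_le (Nat.mul_le_mul hs hs)
    rw [Finset.offDiag_card, sq]
    exact_mod_cast this
  have hn : (0 : ℝ) < (n : ℝ) ^ 2 := by
    have : 0 < n := hs_pos.trans_le hs
    positivity
  refine lt_of_mul_lt_mul_left ?_ hn.le
  calc (n : ℝ) ^ 2 * ∑ p ∈ s.offDiag, f p
      ≤ s.offDiag.card * c := by
        rw [Finset.mul_sum, ← nsmul_eq_mul]
        exact Finset.sum_le_card_nsmul _ _ _ hf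
    _ < (n : ℝ) ^ 2 * c := mul_lt_mul_of_pos_right hcard hc

section

variable (A11 B11 C11 A12 B12 C12 : ℝ) {n : ℕ} (x : Fin n → EuclideanSpace ℝ (Fin 2))

lemma dist_pennyPos (i j : Fin n) (b b' : Bool) :
    dist (pennyPos x (i, b)) (pennyPos x (j, b')) =
      Real.sqrt (dist (x i) (x j) ^ 2 + if b = b' then 0 else 1) := by
  have hplanar : dist (x i) (x j) ^ 2 = (x i 0 - x j 0) ^ 2 + (x i 1 - x j 1) ^ 2 := by
    rw [EuclideanSpace.dist_eq, Real.sq_sqrt (by positivity)]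
    simp [Fin.sum_univ_two, Real.dist_eq, sq_abs]
  rw [EuclideanSpace.dist_eq, hplanar]
  cases b <;> cases b' <;> simp [pennyPos, Fin.sum_univ_three, Real.dist_eq, sq_abs]

lemma pennyU_self (a : Fin n × Bool) : pennyU A11 B11 C11 A12 B12 C12 x a a = A11 := by
  simp [pennyU]

lemma sum_bool_pennyU (i j : Fin n) :
    ∑ b : Bool, ∑ b' : Bool, pennyU A11 B11 C11 A12 B12 C12 x (i, b) (j, b') =
      2 * pennyF A11 B11 C11 A12 B12 C12 (dist (x i) (x j)) := by
  have hsqrt : Real.sqrt (dist (x i) (x j) ^ 2 + 0) = dist (x i) (x j) := by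
    rw [add_zero, Real.sqrt_sq dist_nonneg]
  have hsqrt6 : Real.sqrt (dist (x i) (x j) ^ 2 + 1) ^ 6 = (dist (x i) (x j) ^ 2 + 1) ^ 3 := by
    rw [show 6 = 2 * 3 from rfl, pow_mul, Real.sq_sqrt (by positivity)]
  simp only [Fintype.sum_bool, pennyU, dist_pennyPos, reduceIte, Bool.true_eq_false,
    Bool.false_eq_true]
  rw [hsqrt, hsqrt6, pennyF]
  ring

lemma pennyF_zero : pennyF A11 B11 C11 A12 B12 C12 0 = A11 + pennyE0 A12 B12 C12 := by
  simp only [pennyF, pennyE0, mul_zero, neg_zero, Real.exp_zero, mul_one, ne_eq,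
    OfNat.ofNat_ne_zero, not_false_eq_true, zero_pow, div_zero, sub_zero, add_zero, zero_add,
    Real.sqrt_one, one_pow, div_one]
  ring

lemma pennyET_eq (T : Finset (Fin n)) :
    pennyET A11 B11 C11 A12 B12 C12 x T =
      T.card * pennyE0 A12 B12 C12 +
        ∑ p ∈ T.offDiag, pennyF A11 B11 C11 A12 B12 C12 (dist (x p.1) (x p.2)) := by
  set U := pennyU A11 B11 C11 A12 B12 C12 x
  set F := fun i j => pennyF A11 B11 C11 A12 B12 C12 (dist (x i) (x j))
  set S := T ×ˢ (Finset.univ : Finset Bool)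
  have hions := Finset.sum_offDiag_add_sum_self S U
  have hpennies := Finset.sum_offDiag_add_sum_self T F
  have hions_sum : ∑ a ∈ S, ∑ b ∈ S, U a b = ∑ i ∈ T, ∑ j ∈ T, 2 * F i j := by
    simp only [S, Finset.sum_product]
    refine Finset.sum_congr rfl fun i _ => ?_
    rw [Finset.sum_comm]
    exact Finset.sum_congr rfl fun j _ => sum_bool_pennyU A11 B11 C11 A12 B12 C12 x i j
  have hions_self : ∑ a ∈ S, U a a = 2 * T.card * A11 := by
    simp only [U, S, pennyU_self, Finset.sum_const, Finset.card_product, Finset.card_univ,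
      Fintype.card_bool, nsmul_eq_mul]
    push_cast
    ring
  have hpennies_self : ∑ i ∈ T, F i i = T.card * (A11 + pennyE0 A12 B12 C12) := by
    simp only [F, dist_self, pennyF_zero, Finset.sum_const, nsmul_eq_mul]
  simp only [← Finset.mul_sum] at hions_sum
  rw [hions_sum, hions_self] at hions
  rw [hpennies_self] at hpennies
  rw [pennyET, pennyES]
  linear_combination hions / 2 - hpennies

end

theorem penny_energy_lt_iff_independent_general {n : ℕ} (x : Fin n → EuclideanSpace ℝ (Fin 2))
    (hx : ∀ i j : Fin n, i ≠ j →
      dist (x i) (x j) = (n : ℝ) ∨ Real.sqrt 2 * n ≤ dist (x i) (x j))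
    (A11 B11 C11 A12 B12 C12 : ℝ)
    (hE0 : pennyE0 A12 B12 C12 < 0)
    (h1 : -pennyE0 A12 B12 C12 ≤ pennyF A11 B11 C11 A12 B12 C12 n)
    (h2 : ∀ r : ℝ, Real.sqrt 2 * n ≤ r →
      (n : ℝ) ^ 2 * |pennyF A11 B11 C11 A12 B12 C12 r| ≤ -pennyE0 A12 B12 C12)
    (h3 : ∀ r : ℝ, Real.sqrt 2 * n ≤ r → 0 < pennyF A11 B11 C11 A12 B12 C12 r)
    (T : Finset (Fin n)) (k : ℕ) (hk : T.card = k) :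
    pennyET A11 B11 C11 A12 B12 C12 x T < ((k : ℝ) - 1) * pennyE0 A12 B12 C12 ↔
      ∀ i ∈ T, ∀ j ∈ T, i ≠ j → Real.sqrt 2 * n ≤ dist (x i) (x j) := by
  set F := fun p : Fin n × Fin n => pennyF A11 B11 C11 A12 B12 C12 (dist (x p.1) (x p.2))
  rw [pennyET_eq, ← hk, sub_one_mul, sub_eq_add_neg, add_lt_add_iff_left]
  constructor
  · intro hlt i hi j hj hij
    by_contra hfar
    have htangent : dist (x i) (x j) = n := (hx i j hij).resolve_right hfar
    have hF_nonneg : ∀ p ∈ T.offDiag, 0 ≤ F p := fun p hp => by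
      obtain ⟨-, -, hne⟩ := Finset.mem_offDiag.mp hp
      rcases hx p.1 p.2 hne with hd | hd
      · simp only [F, hd]; linarith
      · exact (h3 _ hd).le
    have := Finset.single_le_sum hF_nonneg (a := (i, j)) (Finset.mem_offDiag.mpr ⟨hi, hj, hij⟩)
    simp only [F, htangent] at this
    linarith
  · intro hfar
    refine Finset.sum_offDiag_lt_of_sq_mul_le (card_finset_fin_le T) (neg_pos.mpr hE0) ?_
    intro p hp
    obtain ⟨hp1, hp2, hne⟩ := Finset.mem_offDiag.mp hp
    exact (mul_le_mul_of_nonneg_left (le_abs_self _) (by positivity)).trans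
      (h2 _ (hfar _ hp1 _ hp2 hne))

/-- Under the penny construction with inequalities (1)–(3) and `E₀ < 0`: for every
nonempty `T ⊆ Fin n` of cardinality `k`, the total energy of the ions indexed by `T` is
strictly below `(k−1)·E₀` iff every two distinct indices of `T` are at planar distance at
least `√2·n`, i.e. `T` is independent in the tangency graph. -/
theorem penny_energy_lt_iff_independent {n : ℕ} (hn : 3 ≤ n) (x : Fin n → EuclideanSpace ℝ (Fin 2))
    (hx : ∀ i j : Fin n, i ≠ j →
      dist (x i) (x j) = (n : ℝ) ∨ Real.sqrt 2 * n ≤ dist (x i) (x j))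
    (A11 B11 C11 A12 B12 C12 : ℝ)
    (hA11 : 0 ≤ A11) (hB11 : 0 ≤ B11) (hC11 : 0 ≤ C11)
    (hA12 : 0 ≤ A12) (hB12 : 0 ≤ B12) (hC12 : 0 ≤ C12)
    (hE0 : pennyE0 A12 B12 C12 < 0)
    (h1 : -pennyE0 A12 B12 C12 ≤ pennyF A11 B11 C11 A12 B12 C12 n)
    (h2 : ∀ r : ℝ, Real.sqrt 2 * n ≤ r →
      (n : ℝ) ^ 2 * |pennyF A11 B11 C11 A12 B12 C12 r| ≤ -pennyE0 A12 B12 C12)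
    (h3 : ∀ r : ℝ, Real.sqrt 2 * n ≤ r → 0 < pennyF A11 B11 C11 A12 B12 C12 r)
    (T : Finset (Fin n)) (hT : T.Nonempty) (k : ℕ) (hk : T.card = k) :
    pennyET A11 B11 C11 A12 B12 C12 x T < ((k : ℝ) - 1) * pennyE0 A12 B12 C12 ↔
      ∀ i ∈ T, ∀ j ∈ T, i ≠ j → Real.sqrt 2 * n ≤ dist (x i) (x j) :=
  penny_energy_lt_iff_independent_general x hx A11 B11 C11 A12 B12 C12 hE0 h1 h2 h3 T k hk
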